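/- Consider the Darwinian (1+1) EA on DLB_k over {0,1}^n. For every j ∈ [0..n/k−1], with probability at least 2^{−k} the run at some point has a parent individual x with j leading all-ones blocks and all-zeros (j+1)-st block, i.e., with DLB_k(x) = jk + k − 1; in other words, each fitness level jk + k − 1 is visited with probability at least 2^{−k}. -/

import Mathlib

open Finset
open scoped ENNReal

noncomputable section

/-- Bit strings of length `n`. -/
abbrev BitStr (n : ℕ) := Fin n → Bool

/-- The all-ones string. -/
def allOnes (n : ℕ) : BitStr n := fun _ => true

/-- The number of ones in the `ℓ`-th block (`0`-indexed), i.e. among the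
(`0`-indexed) positions `ℓ*k, …, ℓ*k + k - 1`. -/
def blockOnes (k n : ℕ) (x : BitStr n) (ℓ : ℕ) : ℕ :=
  (Finset.univ.filter fun i : Fin n => ℓ * k ≤ i.1 ∧ i.1 < ℓ * k + k ∧ x i = true).card

/-- The number of leading all-ones blocks of `x` (at most `n / k`).  For
`x ≠ allOnes n` (and `k ∣ n`) this is `c(x) - 1`, the (`0`-indexed) index of the
critical block. -/
def leadBlocks (k n : ℕ) (x : BitStr n) : ℕ :=
  Nat.findGreatest (fun j => ∀ ℓ < j, blockOnes k n x ℓ = k) (n / k)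

/-- The DeceptiveLeadingBlocks function with block length `k`:
`DLB_k(x) = k (c(x) - 1) + (k - 1 - ‖x_{B_{c(x)}}‖₁)` for `x` not the all-ones
string, and `DLB_k` of the all-ones string is `n`. -/
def dlb (k n : ℕ) (x : BitStr n) : ℕ :=
  if x = allOnes n then n
  else k * leadBlocks k n x + (k - 1 - blockOnes k n x (leadBlocks k n x))

/-- Bitwise mutation with rate `1/n`: each bit is flipped independently with
probability `1/n`. -/
def mutatePMF (n : ℕ) (x : BitStr n) : PMF (BitStr n) :=
  PMF.ofFintype
    (fun y => ∏ i, if y i = x i then 1 - (n : ℝ≥0∞)⁻¹ else (n : ℝ≥0∞)⁻¹)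
    (by
      classical
      have key := (Fintype.prod_sum
        (fun (i : Fin n) (b : Bool) => if b = x i then 1 - (n : ℝ≥0∞)⁻¹ else (n : ℝ≥0∞)⁻¹)).symm
      rw [key]
      refine Finset.prod_eq_one fun i _ => ?_
      have h1 : (1 : ℝ≥0∞) ≤ (n : ℝ≥0∞) := by exact_mod_cast i.pos
      have hinv : (n : ℝ≥0∞)⁻¹ ≤ 1 := ENNReal.inv_le_one.mpr h1
      rcases Bool.eq_false_or_eq_true (x i) with hx | hx <;>
        simp [Fintype.sum_bool, hx, tsub_add_cancel_of_le hinv, add_tsub_cancel_of_le hinv])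

/-- The probability of an event `E` under a probability mass function `p`. -/
def prOf {α : Type*} (p : PMF α) (E : Set α) : ℝ≥0∞ :=
  ∑' a, E.indicator (fun a => p a) a

/-- One iteration of the Darwinian (1+1) EA on `dlb k n`, with a flag recording
whether the parent individual has ever had fitness exactly `lev`. -/
def dVisitStep (k n lev : ℕ) (s : BitStr n × Bool) : PMF (BitStr n × Bool) :=
  (mutatePMF n s.1).map fun y =>
    (if dlb k n s.1 ≤ dlb k n y then y else s.1,
     if s.2 = true ∨ dlb k n (if dlb k n s.1 ≤ dlb k n y then y else s.1) = lev
     then true else false)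

/-- The state distribution after `t` iterations of the Darwinian (1+1) EA on
`dlb k n`, with a flag recording whether the fitness level `lev` has been visited
by the parent individual at some time so far. -/
def dVisitDist (k n lev : ℕ) : ℕ → PMF (BitStr n × Bool)
  | 0 => (PMF.uniformOfFintype (BitStr n)).map fun x =>
      (x, if dlb k n x = lev then true else false)
  | t + 1 => (dVisitDist k n lev t).bind (dVisitStep k n lev)

namespace DLBaux
/-- helper block set -/
def blk (k n : ℕ) (j : ℕ) : Finset (Fin n) :=
  Finset.univ.filter fun i : Fin n => j * k ≤ i.1 ∧ i.1 < j * k + k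

lemma mem_blk {k n j : ℕ} {i : Fin n} : i ∈ blk k n j ↔ j * k ≤ i.1 ∧ i.1 < j * k + k := by
  simp [blk]

lemma card_blk {k n j : ℕ} (h : j * k + k ≤ n) : (blk k n j).card = k := by
  classical
  conv_rhs => rw [← Fintype.card_fin k, ← Finset.card_univ]
  refine Finset.card_bij' (fun a ha => (⟨a.1 - j * k, by have := mem_blk.mp ha; omega⟩ : Fin k))
    (fun t _ => (⟨j * k + t.1, by have := t.isLt; omega⟩ : Fin n)) ?_ ?_ ?_ ?_
  · intro a ha; exact Finset.mem_univ _
  · intro t _; exact mem_blk.mpr (by simp)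
  · intro a ha; have := mem_blk.mp ha; ext; simp; omega
  · intro t _; ext; simp

lemma blockOnes_eq (k n : ℕ) (x : BitStr n) (ℓ : ℕ) :
    blockOnes k n x ℓ = ((blk k n ℓ).filter fun i => x i = true).card := by
  classical
  unfold blockOnes
  congr 1
  ext i
  simp [blk, Finset.mem_filter, and_assoc]

lemma blockOnes_le {k n : ℕ} (x : BitStr n) {ℓ : ℕ} (h : ℓ * k + k ≤ n) :
    blockOnes k n x ℓ ≤ k := by
  classical
  rw [blockOnes_eq]
  exact (Finset.card_le_card (Finset.filter_subset _ _)).trans_eq (card_blk h)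

lemma blockOnes_eq_k_iff {k n : ℕ} (x : BitStr n) {ℓ : ℕ} (h : ℓ * k + k ≤ n) :
    blockOnes k n x ℓ = k ↔ ∀ i ∈ blk k n ℓ, x i = true := by
  classical
  rw [blockOnes_eq]
  constructor
  · intro hc i hi
    have hsub : (blk k n ℓ).filter (fun i => x i = true) = blk k n ℓ := by
      apply Finset.eq_of_subset_of_card_le (Finset.filter_subset _ _)
      rw [hc, card_blk h]
    rw [← hsub] at hi
    exact (Finset.mem_filter.mp hi).2
  · intro hall
    rw [Finset.filter_true_of_mem hall, card_blk h]

lemma blockOnes_zero_iff {k n : ℕ} (x : BitStr n) {ℓ : ℕ} :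
    blockOnes k n x ℓ = 0 ↔ ∀ i ∈ blk k n ℓ, x i = false := by
  classical
  rw [blockOnes_eq, Finset.card_eq_zero, Finset.filter_eq_empty_iff]
  simp

lemma blockOnes_congr {k n : ℕ} {x z : BitStr n} {ℓ : ℕ}
    (h : ∀ i ∈ blk k n ℓ, x i = z i) : blockOnes k n x ℓ = blockOnes k n z ℓ := by
  classical
  rw [blockOnes_eq, blockOnes_eq]
  congr 1
  apply Finset.filter_congr
  intro i hi
  rw [h i hi]

/-- blocks with distinct indices are disjoint: membership version -/
lemma blk_disjoint {k n : ℕ} {ℓ j : ℕ} (hne : ℓ ≠ j) {i : Fin n}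
    (hi : i ∈ blk k n ℓ) : i ∉ blk k n j := by
  intro hj
  have h1 := mem_blk.mp hi
  have h2 := mem_blk.mp hj
  rcases Nat.lt_or_ge ℓ j with h | h
  · have h3 : (ℓ + 1) * k ≤ j * k := Nat.mul_le_mul_right k h
    rw [Nat.succ_mul] at h3
    omega
  · have hlt : j < ℓ := lt_of_le_of_ne h (Ne.symm hne)
    have h3 : (j + 1) * k ≤ ℓ * k := Nat.mul_le_mul_right k hlt
    rw [Nat.succ_mul] at h3
    omega

section LB
variable {k n : ℕ}

lemma leadBlocks_le (x : BitStr n) : leadBlocks k n x ≤ n / k :=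
  Nat.findGreatest_le _

lemma blocks_complete (x : BitStr n) : ∀ ℓ < leadBlocks k n x, blockOnes k n x ℓ = k := by
  classical
  have h := Nat.findGreatest_spec (P := fun b => ∀ ℓ < b, blockOnes k n x ℓ = k)
    (n := n / k) (m := 0) (Nat.zero_le _) (fun ℓ h => absurd h (Nat.not_lt_zero ℓ))
  exact h

lemma le_leadBlocks {x : BitStr n} {b : ℕ} (hb : b ≤ n / k)
    (h : ∀ ℓ < b, blockOnes k n x ℓ = k) : b ≤ leadBlocks k n x := by
  exact Nat.le_findGreatest (P := fun b => ∀ ℓ < b, blockOnes k n x ℓ = k) hb h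

lemma critical_incomplete {x : BitStr n} (h : leadBlocks k n x < n / k) :
    blockOnes k n x (leadBlocks k n x) ≠ k := by
  classical
  intro hc
  refine Nat.findGreatest_is_greatest (P := fun b => ∀ ℓ < b, blockOnes k n x ℓ = k)
    (k := leadBlocks k n x + 1) (Nat.lt_succ_self _) h ?_
  intro ℓ hℓ
  rcases Nat.lt_succ_iff_lt_or_eq.mp hℓ with h' | h'
  · exact blocks_complete x ℓ h'
  · rw [h']; exact hc

lemma blk_le_n {j : ℕ} (hdvd : k ∣ n) (hj : j < n / k) : j * k + k ≤ n := by
  have h3 : (j + 1) * k ≤ (n / k) * k := Nat.mul_le_mul_right k hj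
  rw [Nat.succ_mul] at h3
  have hnk : n / k * k = n := Nat.div_mul_cancel hdvd
  omega

lemma leadBlocks_allOnes (hdvd : k ∣ n) : leadBlocks k n (allOnes n) = n / k := by
  refine le_antisymm (leadBlocks_le _) (le_leadBlocks le_rfl ?_)
  intro ℓ hℓ
  rw [blockOnes_eq_k_iff _ (blk_le_n hdvd hℓ)]
  intro i _
  rfl

lemma eq_allOnes_of_leadBlocks (hdvd : k ∣ n) (hk : 0 < k) {x : BitStr n}
    (h : n / k ≤ leadBlocks k n x) : x = allOnes n := by
  funext i
  have hℓ : i.1 / k < n / k := Nat.div_lt_div_of_lt_of_dvd hdvd i.isLt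
  have hc : blockOnes k n x (i.1 / k) = k := blocks_complete x _ (lt_of_lt_of_le hℓ h)
  rw [blockOnes_eq_k_iff _ (blk_le_n hdvd hℓ)] at hc
  have hmem : i ∈ blk k n (i.1 / k) := mem_blk.mpr (by
    have h1 : i.1 / k * k + i.1 % k = i.1 := Nat.div_add_mod' i.1 k
    have h2 := Nat.mod_lt i.1 hk
    constructor <;> omega)
  have := hc i hmem
  simpa [allOnes] using this

lemma leadBlocks_lt_of_ne (hdvd : k ∣ n) (hk : 0 < k) {x : BitStr n}
    (h : x ≠ allOnes n) : leadBlocks k n x < n / k := by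
  rcases lt_or_ge (leadBlocks k n x) (n / k) with h' | h'
  · exact h'
  · exact absurd (eq_allOnes_of_leadBlocks hdvd hk h') h

end LB

section Dlb
variable {k n j : ℕ}

lemma lead_ge_iff (hj : j ≤ n / k) {x : BitStr n} :
    j ≤ leadBlocks k n x ↔ ∀ ℓ < j, blockOnes k n x ℓ = k := by
  constructor
  · intro h ℓ hℓ
    exact blocks_complete x ℓ (lt_of_lt_of_le hℓ h)
  · intro h
    exact le_leadBlocks hj h

lemma blockOnes_local {x z : BitStr n} (hxz : ∀ i, i ∉ blk k n j → x i = z i)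
    {ℓ : ℕ} (hℓ : ℓ ≠ j) : blockOnes k n x ℓ = blockOnes k n z ℓ :=
  blockOnes_congr (fun i hi => hxz i (blk_disjoint hℓ hi))

lemma lead_local (hdvd : k ∣ n) (hjle : j ≤ n / k) {x z : BitStr n}
    (hxz : ∀ i, i ∉ blk k n j → x i = z i) (hx : leadBlocks k n x < j) :
    leadBlocks k n z = leadBlocks k n x ∧ dlb k n z = dlb k n x := by
  set b := leadBlocks k n x with hbdef
  have hbn : b < n / k := lt_of_lt_of_le hx hjle
  have h1 : ∀ ℓ, ℓ ≠ j → blockOnes k n x ℓ = blockOnes k n z ℓ :=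
    fun ℓ hℓ => blockOnes_local hxz hℓ
  have hbz : b ≤ leadBlocks k n z := by
    refine le_leadBlocks (le_of_lt hbn) (fun ℓ hℓ => ?_)
    rw [← h1 ℓ (by omega)]
    exact blocks_complete x ℓ hℓ
  have hzb : leadBlocks k n z ≤ b := by
    by_contra hcon
    push_neg at hcon
    have hzk : blockOnes k n z b = k := blocks_complete z b hcon
    rw [← h1 b (by omega)] at hzk
    exact critical_incomplete hbn hzk
  have hlead : leadBlocks k n z = b := le_antisymm hzb hbz
  refine ⟨hlead, ?_⟩
  have hk : 0 < k := by
    rcases Nat.eq_zero_or_pos k with h | h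
    · subst h; simp at hbn
    · exact h
  have hxne : x ≠ allOnes n := by
    intro hcon
    rw [hcon, leadBlocks_allOnes hdvd] at hbdef
    omega
  have hzne : z ≠ allOnes n := by
    intro hcon
    rw [hcon, leadBlocks_allOnes hdvd] at hlead
    omega
  rw [dlb, dlb, if_neg hxne, if_neg hzne, hlead, ← hbdef, h1 b (by omega)]

lemma lead_ge_local (hjle : j ≤ n / k) {x z : BitStr n}
    (hxz : ∀ i, i ∉ blk k n j → x i = z i) (hx : j ≤ leadBlocks k n x) :
    j ≤ leadBlocks k n z := by
  rw [lead_ge_iff hjle] at hx ⊢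
  intro ℓ hℓ
  rw [← blockOnes_local hxz (by omega)]
  exact hx ℓ hℓ

lemma dlb_ge_iff (hdvd : k ∣ n) (hk : 0 < k) (hjle : j ≤ n / k) {x : BitStr n} :
    j * k ≤ dlb k n x ↔ j ≤ leadBlocks k n x := by
  constructor
  · intro h
    by_contra hcon
    push_neg at hcon
    have hxne : x ≠ allOnes n := by
      intro he
      rw [he, leadBlocks_allOnes hdvd] at hcon
      omega
    rw [dlb, if_neg hxne] at h
    have h2 : k * (leadBlocks k n x + 1) ≤ k * j := Nat.mul_le_mul_left k hcon
    rw [Nat.mul_succ] at h2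
    have h3 : k * j = j * k := Nat.mul_comm _ _
    have h4 : k - 1 - blockOnes k n x (leadBlocks k n x) ≤ k - 1 := by omega
    omega
  · intro h
    rcases eq_or_ne x (allOnes n) with he | hne
    · rw [he, dlb, if_pos rfl]
      have h2 : j * k ≤ (n / k) * k := Nat.mul_le_mul_right k hjle
      have h3 : n / k * k = n := Nat.div_mul_cancel hdvd
      omega
    · rw [dlb, if_neg hne]
      have h2 : k * j ≤ k * leadBlocks k n x := Nat.mul_le_mul_left k h
      have h3 : k * j = j * k := Nat.mul_comm _ _
      omega

lemma dlb_lt_iff (hdvd : k ∣ n) (hk : 0 < k) (hjle : j ≤ n / k) {x : BitStr n} :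
    dlb k n x < j * k ↔ leadBlocks k n x < j := by
  rw [← Nat.not_le, ← Nat.not_le, not_iff_not]
  exact dlb_ge_iff hdvd hk hjle

lemma dlb_le_n (hdvd : k ∣ n) (hk : 0 < k) (x : BitStr n) : dlb k n x ≤ n := by
  rcases eq_or_ne x (allOnes n) with he | hne
  · rw [he, dlb, if_pos rfl]
  · rw [dlb, if_neg hne]
    have h1 : leadBlocks k n x < n / k := leadBlocks_lt_of_ne hdvd hk hne
    have h2 : k * (leadBlocks k n x + 1) ≤ k * (n / k) := Nat.mul_le_mul_left k h1
    rw [Nat.mul_succ] at h2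
    have h3 : k * (n / k) = n := Nat.mul_div_cancel' hdvd
    have h4 : k - 1 - blockOnes k n x (leadBlocks k n x) ≤ k - 1 := by omega
    omega

lemma dlb_eq_L_iff (hdvd : k ∣ n) (hk2 : 2 ≤ k) (hj : j < n / k) {y : BitStr n} :
    dlb k n y = j * k + (k - 1) ↔
      (∀ ℓ < j, blockOnes k n y ℓ = k) ∧ blockOnes k n y j = 0 := by
  have hk : 0 < k := by omega
  have hblen : j * k + k ≤ n := blk_le_n hdvd hj
  constructor
  · intro h
    have hyne : y ≠ allOnes n := by
      intro he
      rw [he, dlb, if_pos rfl] at h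
      omega
    rw [dlb, if_neg hyne] at h
    set b := leadBlocks k n y with hbdef
    set m := blockOnes k n y b with hmdef
    have hble : k * b ≤ k * j + (k - 1) := by
      have : k * b ≤ k * b + (k - 1 - m) := Nat.le_add_right _ _
      have hjk : j * k = k * j := Nat.mul_comm _ _
      omega
    have hbge : k * j ≤ k * b := by
      have h4 : k - 1 - m ≤ k - 1 := by omega
      have hjk : j * k = k * j := Nat.mul_comm _ _
      omega
    have hbj : b = j := by
      have h5 : j ≤ b := Nat.le_of_mul_le_mul_left hbge hk
      have h6 : b < j + 1 := by
        have : k * b < k * (j + 1) := by rw [Nat.mul_succ]; omega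
        exact Nat.lt_of_mul_lt_mul_left this
      omega
    have hm0 : m = 0 := by
      rw [hbj] at h
      have hjk : j * k = k * j := Nat.mul_comm _ _
      omega
    constructor
    · rw [← hbj]
      exact blocks_complete y
    · rw [← hbj, ← hmdef, hm0]
  · rintro ⟨h1, h0⟩
    have hlge : j ≤ leadBlocks k n y := le_leadBlocks (le_of_lt hj) h1
    have hlle : leadBlocks k n y ≤ j := by
      by_contra hcon
      push_neg at hcon
      have := blocks_complete y j hcon
      omega
    have hlead : leadBlocks k n y = j := le_antisymm hlle hlge
    have hyne : y ≠ allOnes n := by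
      intro he
      rw [he, leadBlocks_allOnes hdvd] at hlead
      omega
    rw [dlb, if_neg hyne, hlead, h0]
    have hjk : j * k = k * j := Nat.mul_comm _ _
    omega

end Dlb

section Xor
variable {k n j : ℕ}

/-- xor by a mask -/
def bxor {n : ℕ} (d x : BitStr n) : BitStr n := fun i => xor (d i) (x i)

lemma bxor_bxor {n : ℕ} (d x : BitStr n) : bxor d (bxor d x) = x := by
  funext i
  cases hd : d i <;> simp [bxor, hd]

lemma bxor_involutive {n : ℕ} (d : BitStr n) : Function.Involutive (bxor d) :=
  bxor_bxor d

/-- xor as a permutation -/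
def xorPerm {n : ℕ} (d : BitStr n) : Equiv.Perm (BitStr n) :=
  (bxor_involutive d).toPerm

lemma xorPerm_apply {n : ℕ} (d x : BitStr n) : xorPerm d x = bxor d x := rfl

/-- masks supported on block `j` -/
def Dset (k n j : ℕ) : Finset (BitStr n) :=
  Finset.univ.filter fun d => ∀ i : Fin n, d i = true → i ∈ blk k n j

lemma mem_Dset {d : BitStr n} : d ∈ Dset k n j ↔ ∀ i : Fin n, d i = true → i ∈ blk k n j := by
  simp [Dset]

lemma Dset_false {d : BitStr n} (hd : d ∈ Dset k n j) {i : Fin n}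
    (hi : i ∉ blk k n j) : d i = false := by
  rcases Bool.eq_false_or_eq_true (d i) with h | h
  · exact absurd (mem_Dset.mp hd i h) hi
  · exact h

lemma bxor_outside {d x : BitStr n} (hd : d ∈ Dset k n j) {i : Fin n}
    (hi : i ∉ blk k n j) : bxor d x i = x i := by
  rw [bxor, Dset_false hd hi]
  simp

lemma agree_outside_bxor {d x : BitStr n} (hd : d ∈ Dset k n j) :
    ∀ i, i ∉ blk k n j → x i = bxor d x i :=
  fun i hi => (bxor_outside hd hi).symm

lemma card_Dset (h : j * k + k ≤ n) : (Dset k n j).card = 2 ^ k := by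
  classical
  have hcard : (Finset.univ : Finset (Fin k → Bool)).card = 2 ^ k := by
    simp [Fintype.card_fun]
  rw [← hcard]
  refine Finset.card_bij' (fun d _ => fun t : Fin k => d ⟨j * k + t.1, by have := t.isLt; omega⟩)
    (fun u _ => fun i : Fin n => if hi : i ∈ blk k n j
      then u ⟨i.1 - j * k, by have := (mem_blk.mp hi); omega⟩ else false) ?_ ?_ ?_ ?_
  · intro d _; exact Finset.mem_univ _
  · intro u _
    refine mem_Dset.mpr (fun i hi => ?_)
    by_contra hcon
    rw [dif_neg hcon] at hi
    exact Bool.false_ne_true hi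
  · intro d hd
    funext i
    dsimp only
    by_cases hi : i ∈ blk k n j
    · rw [dif_pos hi]
      congr 1
      have := mem_blk.mp hi
      ext
      simp
      omega
    · rw [dif_neg hi, Dset_false hd hi]
  · intro u _
    funext t
    dsimp only
    have hmem : (⟨j * k + t.1, by have := t.isLt; omega⟩ : Fin n) ∈ blk k n j :=
      mem_blk.mpr (by simp)
    rw [dif_pos hmem]
    congr 1
    ext
    simp

lemma blockOnes_bxor_ne {d y : BitStr n} (hd : d ∈ Dset k n j) {ℓ : ℕ} (hℓ : ℓ ≠ j) :
    blockOnes k n (bxor d y) ℓ = blockOnes k n y ℓ :=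
  (blockOnes_local (agree_outside_bxor hd) hℓ).symm

/-- The core combinatorial identity. -/
lemma core_sum (hdvd : k ∣ n) (hk2 : 2 ≤ k) (hj : j < n / k) (y : BitStr n) :
    (∑ d ∈ Dset k n j, if dlb k n (bxor d y) = j * k + (k - 1) then (1 : ℝ≥0∞) else 0)
      = if j * k ≤ dlb k n y then 1 else 0 := by
  classical
  have hk : 0 < k := by omega
  have hA : ∀ d ∈ Dset k n j,
      (dlb k n (bxor d y) = j * k + (k - 1) ↔
        ((∀ ℓ < j, blockOnes k n y ℓ = k) ∧ ∀ i ∈ blk k n j, d i = y i)) := by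
    intro d hd
    rw [dlb_eq_L_iff hdvd hk2 hj]
    constructor
    · rintro ⟨h1, h2⟩
      refine ⟨fun ℓ hℓ => ?_, fun i hi => ?_⟩
      · rw [← blockOnes_bxor_ne hd (by omega : ℓ ≠ j)]
        exact h1 ℓ hℓ
      · have := (blockOnes_zero_iff _).mp h2 i hi
        rcases Bool.eq_false_or_eq_true (y i) with h | h <;>
          rcases Bool.eq_false_or_eq_true (d i) with h' | h' <;>
            simp [bxor, h, h'] at this ⊢
    · rintro ⟨h1, h2⟩
      refine ⟨fun ℓ hℓ => ?_, ?_⟩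
      · rw [blockOnes_bxor_ne hd (by omega : ℓ ≠ j)]
        exact h1 ℓ hℓ
      · rw [blockOnes_zero_iff]
        intro i hi
        rw [bxor, h2 i hi]
        simp
  have hRHS : (j * k ≤ dlb k n y) ↔ ∀ ℓ < j, blockOnes k n y ℓ = k := by
    rw [dlb_ge_iff hdvd hk hj.le, lead_ge_iff hj.le]
  by_cases hAy : ∀ ℓ < j, blockOnes k n y ℓ = k
  · rw [if_pos (hRHS.mpr hAy)]
    set d₀ : BitStr n := fun i => if i ∈ blk k n j then y i else false with hd₀
    have hd₀mem : d₀ ∈ Dset k n j := by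
      refine mem_Dset.mpr (fun i hi => ?_)
      by_contra hcon
      have hfalse : d₀ i = false := by simp [hd₀, hcon]
      rw [hfalse] at hi
      exact Bool.false_ne_true hi
    rw [Finset.sum_eq_single_of_mem d₀ hd₀mem]
    · rw [if_pos ((hA d₀ hd₀mem).mpr ⟨hAy, fun i hi => by simp [hd₀, hi]⟩)]
    · intro d hd hne
      rw [if_neg]
      intro hcon
      obtain ⟨-, h2⟩ := (hA d hd).mp hcon
      refine hne (funext fun i => ?_)
      by_cases hi : i ∈ blk k n j
      · rw [h2 i hi, hd₀]; simp [if_pos hi]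
      · rw [Dset_false hd hi, hd₀]; simp [if_neg hi]
  · rw [if_neg (fun hcon => hAy (hRHS.mp hcon))]
    refine Finset.sum_eq_zero (fun d hd => ?_)
    rw [if_neg]
    intro hcon
    exact hAy ((hA d hd).mp hcon).1

end Xor

section Prob
variable {k n j : ℕ}

/-- mutation weight -/
def mutW (n : ℕ) (x y : BitStr n) : ℝ≥0∞ :=
  ∏ i, if y i = x i then 1 - (n : ℝ≥0∞)⁻¹ else (n : ℝ≥0∞)⁻¹

lemma mutatePMF_apply (n : ℕ) (x y : BitStr n) : mutatePMF n x y = mutW n x y := by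
  rw [mutatePMF, PMF.ofFintype_apply]
  rfl

lemma mutW_sum (n : ℕ) (x : BitStr n) : ∑ y, mutW n x y = 1 := by
  have h := (mutatePMF n x).tsum_coe
  rw [tsum_fintype] at h
  rw [← h]
  exact Finset.sum_congr rfl (fun y _ => (mutatePMF_apply n x y).symm)

lemma mutW_bxor (d x y : BitStr n) : mutW n (bxor d x) (bxor d y) = mutW n x y := by
  unfold mutW
  refine Finset.prod_congr rfl (fun i _ => ?_)
  cases hd : d i <;> cases hy : y i <;> cases hx : x i <;> simp [bxor, hd, hy, hx]

/-- the deterministic state update given offspring `y` -/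
def Fstep (k n lev : ℕ) (s : BitStr n × Bool) (y : BitStr n) : BitStr n × Bool :=
  (if dlb k n s.1 ≤ dlb k n y then y else s.1,
   if s.2 = true ∨ dlb k n (if dlb k n s.1 ≤ dlb k n y then y else s.1) = lev
   then true else false)

lemma dVisitStep_apply (lev : ℕ) (s s' : BitStr n × Bool) :
    dVisitStep k n lev s s' = ∑ y, if s' = Fstep k n lev s y then mutW n s.1 y else 0 := by
  rw [show dVisitStep k n lev s = (mutatePMF n s.1).map (Fstep k n lev s) from rfl,
    PMF.map_apply, tsum_fintype]
  refine Finset.sum_congr rfl (fun y _ => ?_)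
  by_cases h : s' = Fstep k n lev s y <;> simp [h, mutatePMF_apply]


lemma dVisitDist_succ_apply (lev t : ℕ) (s' : BitStr n × Bool) :
    dVisitDist k n lev (t + 1) s' =
      ∑ s, dVisitDist k n lev t s *
        ∑ y, (if s' = Fstep k n lev s y then mutW n s.1 y else 0) := by
  rw [show dVisitDist k n lev (t+1) = (dVisitDist k n lev t).bind (dVisitStep k n lev) from rfl,
    PMF.bind_apply, tsum_fintype]
  exact Finset.sum_congr rfl (fun s _ => by rw [dVisitStep_apply])

lemma step_exp (lev t : ℕ) (g : BitStr n × Bool → ℝ≥0∞) :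
    (∑ s, dVisitDist k n lev (t + 1) s * g s)
      = ∑ s, dVisitDist k n lev t s * ∑ y, mutW n s.1 y * g (Fstep k n lev s y) := by
  classical
  calc (∑ s', dVisitDist k n lev (t + 1) s' * g s')
      = ∑ s', ∑ s, dVisitDist k n lev t s *
          (∑ y, (if s' = Fstep k n lev s y then mutW n s.1 y else 0)) * g s' := by
        refine Finset.sum_congr rfl (fun s' _ => ?_)
        rw [dVisitDist_succ_apply, Finset.sum_mul]
    _ = ∑ s, ∑ s', dVisitDist k n lev t s *
          (∑ y, (if s' = Fstep k n lev s y then mutW n s.1 y else 0)) * g s' :=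
        Finset.sum_comm
    _ = ∑ s, dVisitDist k n lev t s * ∑ y, mutW n s.1 y * g (Fstep k n lev s y) := by
        refine Finset.sum_congr rfl (fun s _ => ?_)
        simp only [Finset.sum_mul, Finset.mul_sum, ite_mul, zero_mul, mul_ite, mul_zero]
        rw [Finset.sum_comm]
        refine Finset.sum_congr rfl (fun y _ => ?_)
        rw [Finset.sum_ite_eq' Finset.univ (Fstep k n lev s y)
          (fun s' => dVisitDist k n lev t s * mutW n s.1 y * g s')]
        simp [mul_assoc]

lemma init_exp (lev : ℕ) (g : BitStr n × Bool → ℝ≥0∞) :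
    (∑ s, dVisitDist k n lev 0 s * g s)
      = ∑ x : BitStr n, ((Fintype.card (BitStr n) : ℝ≥0∞))⁻¹ *
          g (x, if dlb k n x = lev then true else false) := by
  classical
  have happ : ∀ s : BitStr n × Bool, dVisitDist k n lev 0 s =
      ∑ x : BitStr n, (if s = (x, if dlb k n x = lev then true else false)
        then ((Fintype.card (BitStr n) : ℝ≥0∞))⁻¹ else 0) := by
    intro s
    rw [show dVisitDist k n lev 0 = (PMF.uniformOfFintype (BitStr n)).map
      (fun x => (x, if dlb k n x = lev then true else false)) from rfl,
      PMF.map_apply, tsum_fintype]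
    refine Finset.sum_congr rfl (fun x _ => ?_)
    by_cases h : s = (x, if dlb k n x = lev then true else false) <;>
      simp [h, PMF.uniformOfFintype_apply]
  calc (∑ s, dVisitDist k n lev 0 s * g s)
      = ∑ s, ∑ x : BitStr n, (if s = (x, if dlb k n x = lev then true else false)
          then ((Fintype.card (BitStr n) : ℝ≥0∞))⁻¹ else 0) * g s := by
        refine Finset.sum_congr rfl (fun s _ => ?_)
        rw [happ, Finset.sum_mul]
        
    _ = ∑ x : BitStr n, ∑ s, (if s = (x, if dlb k n x = lev then true else false)
          then ((Fintype.card (BitStr n) : ℝ≥0∞))⁻¹ else 0) * g s := Finset.sum_comm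
    _ = ∑ x : BitStr n, ((Fintype.card (BitStr n) : ℝ≥0∞))⁻¹ *
          g (x, if dlb k n x = lev then true else false) := by
        refine Finset.sum_congr rfl (fun x _ => ?_)
        simp only [ite_mul, zero_mul]
        rw [Finset.sum_ite_eq' Finset.univ ((x, if dlb k n x = lev then true else false))
          (fun s => ((Fintype.card (BitStr n) : ℝ≥0∞))⁻¹ * g s)]
        simp

end Prob

lemma dVisitDist_zero_apply {k n : ℕ} (lev : ℕ) (x : BitStr n) (b : Bool) :
    dVisitDist k n lev 0 (x, b) =
      if b = (if dlb k n x = lev then true else false)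
      then ((Fintype.card (BitStr n) : ℝ≥0∞))⁻¹ else 0 := by
  classical
  rw [show dVisitDist k n lev 0 = (PMF.uniformOfFintype (BitStr n)).map
      (fun x => (x, if dlb k n x = lev then true else false)) from rfl,
    PMF.map_apply, tsum_fintype]
  rw [Finset.sum_eq_single_of_mem x (Finset.mem_univ x)]
  · by_cases hb : b = (if dlb k n x = lev then true else false)
    · rw [if_pos hb, if_pos (by rw [hb]), PMF.uniformOfFintype_apply]
    · have hcon : ¬((x, b) = (x, if dlb k n x = lev then true else false)) := by
        intro hc
        exact hb (congrArg Prod.snd hc)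
      rw [if_neg hcon, if_neg hb]
  · intro x0 _ hne
    rw [if_neg]
    intro hc
    exact hne (congrArg Prod.fst hc).symm

section Inv
variable {k n j : ℕ}

lemma bxor_diff (x₁ x₂ : BitStr n) :
    bxor (fun i => xor (x₁ i) (x₂ i)) x₁ = x₂ := by
  funext i
  cases h1 : x₁ i <;> cases h2 : x₂ i <;> simp [bxor, h1, h2]

lemma deadAt (hdvd : k ∣ n) (hk2 : 2 ≤ k) (hj : j < n / k) {lev : ℕ}
    (hlev : lev = j * k + (k - 1)) :
    ∀ t (x : BitStr n), leadBlocks k n x < j → dVisitDist k n lev t (x, true) = 0 := by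
  classical
  have hk : 0 < k := by omega
  intro t
  induction t with
  | zero =>
    intro x hx
    rw [dVisitDist_zero_apply]
    have hdlb : dlb k n x < j * k := (dlb_lt_iff hdvd hk hj.le).mpr hx
    have hne : dlb k n x ≠ lev := by omega
    rw [if_neg hne]
    simp
  | succ t ih =>
    intro x hx
    have hdlb : dlb k n x < j * k := (dlb_lt_iff hdvd hk hj.le).mpr hx
    rw [dVisitDist_succ_apply]
    refine Finset.sum_eq_zero (fun s _ => ?_)
    rcases s with ⟨x0, b0⟩
    dsimp only
    rcases Bool.eq_false_or_eq_true b0 with hb0 | hb0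
    · -- b0 = true
      subst hb0
      by_cases hpre0 : leadBlocks k n x0 < j
      · rw [ih x0 hpre0, zero_mul]
      · have hge : j * k ≤ dlb k n x0 := by
          rw [dlb_ge_iff hdvd hk hj.le]
          omega
        have hz : (∑ y, if (x, true) = Fstep k n lev (x0, true) y then mutW n x0 y else 0)
            = 0 := by
          refine Finset.sum_eq_zero (fun y _ => ?_)
          rw [if_neg]
          intro hcon
          have h1 := congrArg Prod.fst hcon
          simp only [Fstep] at h1
          by_cases hacc : dlb k n x0 ≤ dlb k n y
          · rw [if_pos hacc] at h1
            rw [← h1] at hacc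
            omega
          · rw [if_neg hacc] at h1
            rw [← h1] at hge
            omega
        rw [hz, mul_zero]
    · -- b0 = false : inner sum is zero
      subst hb0
      have hz : (∑ y, if (x, true) = Fstep k n lev (x0, false) y then mutW n x0 y else 0)
          = 0 := by
        refine Finset.sum_eq_zero (fun y _ => ?_)
        rw [if_neg]
        intro hcon
        have h1 := congrArg Prod.fst hcon
        have h2 := congrArg Prod.snd hcon
        simp only [Fstep] at h1 h2
        have hflag : dlb k n (if dlb k n x0 ≤ dlb k n y then y else x0) = lev := by
          by_contra hc
          simp [hc] at h2
        rw [← h1] at hflag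
        omega
      rw [hz, mul_zero]

/-- transport of a pre-to-pre transition along an xor mask -/
lemma step_transport (hdvd : k ∣ n) (hk2 : 2 ≤ k) (hj : j < n / k) {lev : ℕ}
    (hlev : lev = j * k + (k - 1)) {d : BitStr n} (hd : d ∈ Dset k n j)
    {x0 y z : BitStr n} (hx0 : leadBlocks k n x0 < j) (hz : leadBlocks k n z < j)
    (h : (z, false) = Fstep k n lev (x0, false) y) :
    (bxor d z, false) = Fstep k n lev (bxor d x0, false) (bxor d y) := by
  have hk : 0 < k := by omega
  have h1 := congrArg Prod.fst h
  have h2 := congrArg Prod.snd h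
  simp only [Fstep] at h1 h2
  have hdx0 : dlb k n x0 < j * k := (dlb_lt_iff hdvd hk hj.le).mpr hx0
  have hdz : dlb k n z < j * k := (dlb_lt_iff hdvd hk hj.le).mpr hz
  have hlocx0 := lead_local hdvd hj.le (agree_outside_bxor hd) hx0
  have hflag : dlb k n (if dlb k n x0 ≤ dlb k n y then y else x0) = lev → False := by
    intro hc
    simp [hc] at h2
  by_cases hacc : dlb k n x0 ≤ dlb k n y
  · rw [if_pos hacc] at h1
    -- h1 : z = y
    have hy : leadBlocks k n y < j := by rw [← h1]; exact hz
    have hlocy := lead_local hdvd hj.le (agree_outside_bxor hd) hy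
    have hacc' : dlb k n (bxor d x0) ≤ dlb k n (bxor d y) := by
      rw [hlocx0.2, hlocy.2]; exact hacc
    have hflag' : dlb k n (bxor d y) ≠ lev := by
      rw [hlocy.2]
      intro hc
      exact hflag (by rw [if_pos hacc]; exact hc)
    simp only [Fstep, Prod.mk.injEq]
    rw [if_pos hacc']
    exact ⟨by rw [h1], by simp [hflag']⟩
  · rw [if_neg hacc] at h1
    -- h1 : z = x0
    push_neg at hacc
    have hy : leadBlocks k n y < j := by
      rw [← dlb_lt_iff hdvd hk hj.le]
      omega
    have hlocy := lead_local hdvd hj.le (agree_outside_bxor hd) hy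
    have hacc' : ¬ dlb k n (bxor d x0) ≤ dlb k n (bxor d y) := by
      rw [hlocx0.2, hlocy.2]; omega
    have hflag' : dlb k n (bxor d x0) ≠ lev := by
      rw [hlocx0.2]; omega
    simp only [Fstep, Prod.mk.injEq]
    rw [if_neg hacc']
    exact ⟨by rw [h1], by simp [hflag']⟩

lemma step_transport_iff (hdvd : k ∣ n) (hk2 : 2 ≤ k) (hj : j < n / k) {lev : ℕ}
    (hlev : lev = j * k + (k - 1)) {d : BitStr n} (hd : d ∈ Dset k n j)
    {x0 y z : BitStr n} (hx0 : leadBlocks k n x0 < j) (hz : leadBlocks k n z < j) :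
    (bxor d z, false) = Fstep k n lev (bxor d x0, false) (bxor d y) ↔
      (z, false) = Fstep k n lev (x0, false) y := by
  constructor
  · intro h
    have hx0' : leadBlocks k n (bxor d x0) < j := by
      rw [(lead_local hdvd hj.le (agree_outside_bxor hd) hx0).1]; exact hx0
    have hz' : leadBlocks k n (bxor d z) < j := by
      rw [(lead_local hdvd hj.le (agree_outside_bxor hd) hz).1]; exact hz
    have := step_transport hdvd hk2 hj hlev hd hx0' hz' h
    rwa [bxor_bxor, bxor_bxor, bxor_bxor] at this
  · exact step_transport hdvd hk2 hj hlev hd hx0 hz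

lemma symAt (hdvd : k ∣ n) (hk2 : 2 ≤ k) (hj : j < n / k) {lev : ℕ}
    (hlev : lev = j * k + (k - 1)) :
    ∀ t (x x' : BitStr n), leadBlocks k n x < j →
      (∀ i, i ∉ blk k n j → x i = x' i) →
      dVisitDist k n lev t (x, false) = dVisitDist k n lev t (x', false) := by
  classical
  have hk : 0 < k := by omega
  intro t
  induction t with
  | zero =>
    intro x x' hx hagree
    have hloc := lead_local hdvd hj.le hagree hx
    have hdx : dlb k n x < j * k := (dlb_lt_iff hdvd hk hj.le).mpr hx
    rw [dVisitDist_zero_apply, dVisitDist_zero_apply]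
    have hne : dlb k n x ≠ lev := by omega
    have hne' : dlb k n x' ≠ lev := by rw [hloc.2]; omega
    rw [if_neg hne, if_neg hne']
  | succ t ih =>
    intro x x' hx hagree
    set d : BitStr n := fun i => xor (x i) (x' i) with hddef
    have hd : d ∈ Dset k n j := by
      refine mem_Dset.mpr (fun i hi => ?_)
      by_contra hcon
      have hag := hagree i hcon
      rw [hddef] at hi
      simp only at hi
      rw [hag] at hi
      simp at hi
    have hbx : bxor d x = x' := bxor_diff x x'
    have hx' : leadBlocks k n x' < j := by
      rw [(lead_local hdvd hj.le hagree hx).1]; exact hx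
    rw [dVisitDist_succ_apply, dVisitDist_succ_apply]
    rw [← Equiv.sum_comp ((xorPerm d).prodCongr (Equiv.refl Bool))
      (fun s => dVisitDist k n lev t s *
        ∑ y, (if (x', false) = Fstep k n lev s y then mutW n s.1 y else 0))]
    refine Finset.sum_congr rfl (fun s _ => ?_)
    rcases s with ⟨x0, b0⟩
    simp only [Equiv.prodCongr_apply, Equiv.coe_refl, Prod.map, xorPerm_apply, id]
    rcases Bool.eq_false_or_eq_true b0 with hb0 | hb0
    · -- b0 = true : inner sums vanish since flag stays true
      subst hb0
      have hz2 : ∀ (w z : BitStr n),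
          (∑ y, if (z, false) = Fstep k n lev (w, true) y then mutW n w y else 0) = 0 := by
        intro w z
        refine Finset.sum_eq_zero (fun y _ => ?_)
        rw [if_neg]
        intro hcon
        have h2 := congrArg Prod.snd hcon
        simp [Fstep] at h2
      rw [hz2, hz2, mul_zero, mul_zero]
    · -- b0 = false
      subst hb0
      by_cases hpre0 : leadBlocks k n x0 < j
      · have hμ : dVisitDist k n lev t (bxor d x0, false) = dVisitDist k n lev t (x0, false) :=
          (ih x0 (bxor d x0) hpre0 (agree_outside_bxor hd)).symm
        rw [hμ]
        congr 1
        rw [← Equiv.sum_comp (xorPerm d)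
          (fun y => if (x', false) = Fstep k n lev (bxor d x0, false) y
            then mutW n (bxor d x0) y else 0)]
        refine Finset.sum_congr rfl (fun y _ => ?_)
        simp only [xorPerm_apply]
        rw [mutW_bxor]
        congr 1
        rw [← hbx]
        rw [eq_iff_iff]
        exact (step_transport_iff hdvd hk2 hj hlev hd hpre0 hx).symm
      · have hge : j * k ≤ dlb k n x0 := by
          rw [dlb_ge_iff hdvd hk hj.le]; omega
        have hge' : j * k ≤ dlb k n (bxor d x0) := by
          rw [dlb_ge_iff hdvd hk hj.le]
          exact lead_ge_local hj.le (agree_outside_bxor hd)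
            ((dlb_ge_iff hdvd hk hj.le).mp hge)
        have hz1 : ∀ (w : BitStr n), j * k ≤ dlb k n w → ∀ (z : BitStr n),
            dlb k n z < j * k →
            (∑ y, if (z, false) = Fstep k n lev (w, false) y then mutW n w y else 0) = 0 := by
          intro w hw z hzz
          refine Finset.sum_eq_zero (fun y _ => ?_)
          rw [if_neg]
          intro hcon
          have h1 := congrArg Prod.fst hcon
          simp only [Fstep] at h1
          by_cases hacc : dlb k n w ≤ dlb k n y
          · rw [if_pos hacc] at h1; rw [← h1] at hacc; omega
          · rw [if_neg hacc] at h1; rw [← h1] at hw; omega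
        have hdx : dlb k n x < j * k := (dlb_lt_iff hdvd hk hj.le).mpr hx
        have hdx' : dlb k n x' < j * k := (dlb_lt_iff hdvd hk hj.le).mpr hx'
        rw [hz1 x0 hge x hdx, hz1 (bxor d x0) hge' x' hdx', mul_zero, mul_zero]

end Inv

section Main
variable {k n j : ℕ}

def KF (k n j : ℕ) (x : BitStr n) : ℝ≥0∞ :=
  ∑ y, mutW n x y * (if dlb k n y = j * k + (k - 1) then 1 else 0)

def KP (k n j : ℕ) (x : BitStr n) : ℝ≥0∞ :=
  ∑ y, mutW n x y * (if j * k ≤ dlb k n y then 1 else 0)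

lemma KF_orbit (hdvd : k ∣ n) (hk2 : 2 ≤ k) (hj : j < n / k) (x : BitStr n) :
    ∑ d ∈ Dset k n j, KF k n j (bxor d x) = KP k n j x := by
  have h1 : ∀ d ∈ Dset k n j, KF k n j (bxor d x)
      = ∑ y, mutW n x y * (if dlb k n (bxor d y) = j * k + (k - 1) then 1 else 0) := by
    intro d _
    rw [KF, ← Equiv.sum_comp (xorPerm d)
      (fun y => mutW n (bxor d x) y * (if dlb k n y = j * k + (k - 1) then 1 else 0))]
    refine Finset.sum_congr rfl (fun y _ => ?_)
    rw [xorPerm_apply]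
    rw [mutW_bxor]
  rw [Finset.sum_congr rfl h1, Finset.sum_comm, KP]
  refine Finset.sum_congr rfl (fun y _ => ?_)
  rw [← Finset.mul_sum, core_sum hdvd hk2 hj y]

lemma KL_flag_true (lev : ℕ) {s : BitStr n × Bool} (hs : s.2 = true) (y : BitStr n) :
    (if (Fstep k n lev s y).2 = true then (1 : ℝ≥0∞) else 0) = 1 := by
  simp [Fstep, hs]

lemma KL_flag_pre {lev : ℕ} (hlev : lev = j * k + (k - 1)) {x : BitStr n}
    (hx : dlb k n x < j * k) (y : BitStr n) :
    (if (Fstep k n lev (x, false) y).2 = true then (1 : ℝ≥0∞) else 0)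
      = if dlb k n y = lev then 1 else 0 := by
  by_cases hy : dlb k n y = lev
  · have hacc : dlb k n x ≤ dlb k n y := by omega
    have hflag : (Fstep k n lev (x, false) y).2 = true := by
      simp only [Fstep, if_pos hacc]
      simp [hy]
    rw [if_pos hflag, if_pos hy]
  · have hxne : dlb k n x ≠ lev := by omega
    rw [if_neg hy]
    by_cases hacc : dlb k n x ≤ dlb k n y
    · simp [Fstep, hacc, hy]
    · simp [Fstep, hacc, hxne]

lemma KL_post_pre (lev : ℕ) {x : BitStr n} (hx : dlb k n x < j * k) (b : Bool) (y : BitStr n) :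
    (if j * k ≤ dlb k n (Fstep k n lev (x, b) y).1 then (1 : ℝ≥0∞) else 0)
      = if j * k ≤ dlb k n y then 1 else 0 := by
  by_cases hacc : dlb k n x ≤ dlb k n y
  · simp [Fstep, hacc]
  · have h1 : ¬ j * k ≤ dlb k n x := by omega
    have h2 : ¬ j * k ≤ dlb k n y := by omega
    simp [Fstep, hacc, h1, h2]

lemma post_stay (lev : ℕ) {s : BitStr n × Bool} (hs : j * k ≤ dlb k n s.1) (y : BitStr n) :
    j * k ≤ dlb k n (Fstep k n lev s y).1 := by
  by_cases hacc : dlb k n s.1 ≤ dlb k n y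
  · simp only [Fstep, if_pos hacc]
    omega
  · simp only [Fstep, if_neg hacc]
    exact hs

lemma KL_post_post (lev : ℕ) {s : BitStr n × Bool} (hs : j * k ≤ dlb k n s.1) (y : BitStr n) :
    (if j * k ≤ dlb k n (Fstep k n lev s y).1 then (1 : ℝ≥0∞) else 0) = 1 :=
  if_pos (post_stay lev hs y)

lemma sum_mutW_one (x : BitStr n) : (∑ y, mutW n x y * (1 : ℝ≥0∞)) = 1 := by
  simp only [mul_one]
  exact mutW_sum n x

def FL (k n lev : ℕ) (t : ℕ) : ℝ≥0∞ :=
  ∑ s, dVisitDist k n lev t s * (if s.2 = true then 1 else 0)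

def PO (k n j lev : ℕ) (t : ℕ) : ℝ≥0∞ :=
  ∑ s, dVisitDist k n lev t s * (if j * k ≤ dlb k n s.1 then 1 else 0)

def PR (k n j lev : ℕ) (t : ℕ) : ℝ≥0∞ :=
  ∑ s, dVisitDist k n lev t s * (if dlb k n s.1 < j * k then 1 else 0)

lemma FL_eq (lev t : ℕ) :
    FL k n lev t = ∑ x : BitStr n, dVisitDist k n lev t (x, true) := by
  rw [FL, Fintype.sum_prod_type]
  refine Finset.sum_congr rfl (fun x _ => ?_)
  rw [Fintype.sum_bool]
  simp

lemma PO_eq (lev t : ℕ) :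
    PO k n j lev t = ∑ x : BitStr n,
      (dVisitDist k n lev t (x, true) + dVisitDist k n lev t (x, false)) *
        (if j * k ≤ dlb k n x then 1 else 0) := by
  rw [PO, Fintype.sum_prod_type]
  refine Finset.sum_congr rfl (fun x _ => ?_)
  rw [Fintype.sum_bool]
  ring

/-- the card of Dset as an `ℝ≥0∞` -/
lemma card_Dset_cast (hdvd : k ∣ n) (hj : j < n / k) :
    (((Dset k n j).card : ℕ) : ℝ≥0∞) = 2 ^ k := by
  rw [card_Dset (blk_le_n hdvd hj)]
  push_cast
  ring

lemma mainInv (hdvd : k ∣ n) (hk2 : 2 ≤ k) (hj : j < n / k) {lev : ℕ}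
    (hlev : lev = j * k + (k - 1)) :
    ∀ t, PO k n j lev t ≤ 2 ^ k * FL k n lev t := by
  classical
  have hk : 0 < k := by omega
  intro t
  induction t with
  | zero =>
    -- equality at time 0 via the orbit identity
    have hFL0 : FL k n lev 0 = ∑ x : BitStr n, ((Fintype.card (BitStr n) : ℝ≥0∞))⁻¹ *
        (if dlb k n x = lev then 1 else 0) := by
      rw [FL, init_exp]
      refine Finset.sum_congr rfl (fun x _ => ?_)
      by_cases h : dlb k n x = lev <;> simp [h]
    have hPO0 : PO k n j lev 0 = ∑ x : BitStr n, ((Fintype.card (BitStr n) : ℝ≥0∞))⁻¹ *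
        (if j * k ≤ dlb k n x then 1 else 0) := by
      rw [PO, init_exp]
    rw [hFL0, hPO0]
    rw [← card_Dset_cast hdvd hj, ← nsmul_eq_mul, ← Finset.sum_const]
    have hper : ∀ d ∈ Dset k n j,
        (∑ x : BitStr n, ((Fintype.card (BitStr n) : ℝ≥0∞))⁻¹ *
          (if dlb k n x = lev then 1 else 0))
        = ∑ x : BitStr n, ((Fintype.card (BitStr n) : ℝ≥0∞))⁻¹ *
          (if dlb k n (bxor d x) = lev then 1 else 0) := by
      intro d _
      rw [← Equiv.sum_comp (xorPerm d) (fun x => ((Fintype.card (BitStr n) : ℝ≥0∞))⁻¹ *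
        (if dlb k n x = lev then 1 else 0))]
      exact Finset.sum_congr rfl (fun x _ => by rw [xorPerm_apply])
    rw [Finset.sum_congr rfl hper, Finset.sum_comm]
    refine le_of_eq (Finset.sum_congr rfl (fun x _ => ?_))
    rw [← Finset.mul_sum]
    subst hlev
    rw [core_sum hdvd hk2 hj x]
  | succ t ih =>
    set μ := dVisitDist k n lev t with hμ
    set S := ∑ x : BitStr n, (if dlb k n x < j * k then μ (x, false) * KP k n j x else 0)
      with hS
    set Sf := ∑ x : BitStr n, (if dlb k n x < j * k then μ (x, false) * KF k n j x else 0)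
      with hSf
    -- (A) PO (t+1) = PO t + S
    have hA : PO k n j lev (t + 1) = PO k n j lev t + S := by
      rw [PO, step_exp, Fintype.sum_prod_type]
      rw [PO_eq, hS, ← Finset.sum_add_distrib]
      refine Finset.sum_congr rfl (fun x _ => ?_)
      rw [Fintype.sum_bool]
      by_cases hpost : j * k ≤ dlb k n x
      · have h1 : ∀ b : Bool, (∑ y, mutW n x y *
            (if j * k ≤ dlb k n (Fstep k n lev (x, b) y).1 then (1:ℝ≥0∞) else 0)) = 1 := by
          intro b
          calc (∑ y, mutW n x y *
              (if j * k ≤ dlb k n (Fstep k n lev (x, b) y).1 then (1:ℝ≥0∞) else 0))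
              = ∑ y, mutW n x y * 1 := Finset.sum_congr rfl (fun y _ => by
                rw [KL_post_post lev (s := (x, b)) hpost y])
            _ = 1 := sum_mutW_one x
        rw [h1 true, h1 false, if_pos hpost, if_neg (by omega)]
        ring
      · push_neg at hpost
        have hdead : μ (x, true) = 0 :=
          deadAt hdvd hk2 hj hlev t x ((dlb_lt_iff hdvd hk hj.le).mp hpost)
        have h2 : ∀ b : Bool, (∑ y, mutW n x y *
            (if j * k ≤ dlb k n (Fstep k n lev (x, b) y).1 then (1:ℝ≥0∞) else 0))
            = KP k n j x := by
          intro b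
          rw [KP]
          exact Finset.sum_congr rfl (fun y _ => by rw [KL_post_pre lev hpost b y])
        rw [h2 true, h2 false, hdead, if_neg (by omega), if_pos hpost]
        ring
    -- (B) FL t + Sf ≤ FL (t+1)
    have hB : FL k n lev t + Sf ≤ FL k n lev (t + 1) := by
      have hstep : FL k n lev (t + 1) = ∑ s, dVisitDist k n lev t s *
          ∑ y, mutW n s.1 y * (if (Fstep k n lev s y).2 = true then (1:ℝ≥0∞) else 0) :=
        step_exp lev t _
      rw [hstep, Fintype.sum_prod_type, FL_eq, hSf, ← Finset.sum_add_distrib]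
      refine Finset.sum_le_sum (fun x _ => ?_)
      rw [Fintype.sum_bool]
      have h1 : (∑ y, mutW n x y *
          (if (Fstep k n lev (x, true) y).2 = true then (1:ℝ≥0∞) else 0)) = 1 := by
        calc (∑ y, mutW n x y *
            (if (Fstep k n lev (x, true) y).2 = true then (1:ℝ≥0∞) else 0))
            = ∑ y, mutW n x y * 1 := Finset.sum_congr rfl (fun y _ => by
              rw [KL_flag_true lev (s := (x, true)) rfl y])
          _ = 1 := sum_mutW_one x
      rw [h1, mul_one]
      refine add_le_add_right ?_ _
      by_cases hpre : dlb k n x < j * k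
      · rw [if_pos hpre]
        have h2 : (∑ y, mutW n x y *
            (if (Fstep k n lev (x, false) y).2 = true then (1:ℝ≥0∞) else 0))
            = KF k n j x := by
          rw [KF, ← hlev]
          exact Finset.sum_congr rfl (fun y _ => by rw [KL_flag_pre hlev hpre y])
        rw [h2]
      · rw [if_neg hpre]
        exact zero_le
    -- (C) 2 ^ k * Sf = S
    have hC : (2 : ℝ≥0∞) ^ k * Sf = S := by
      rw [← card_Dset_cast hdvd hj, ← nsmul_eq_mul, ← Finset.sum_const]
      have hper : ∀ d ∈ Dset k n j, Sf = ∑ x : BitStr n,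
          (if dlb k n x < j * k then μ (x, false) * KF k n j (bxor d x) else 0) := by
        intro d hd
        rw [hSf, ← Equiv.sum_comp (xorPerm d) (fun x =>
          (if dlb k n x < j * k then μ (x, false) * KF k n j x else 0))]
        refine Finset.sum_congr rfl (fun x _ => ?_)
        rw [xorPerm_apply]
        by_cases hpre : dlb k n x < j * k
        · have hlx : leadBlocks k n x < j := (dlb_lt_iff hdvd hk hj.le).mp hpre
          have hloc := lead_local hdvd hj.le (agree_outside_bxor hd) hlx
          have hpre' : dlb k n (bxor d x) < j * k := by rw [hloc.2]; exact hpre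
          rw [if_pos hpre, if_pos hpre']
          have hsym : μ (bxor d x, false) = μ (x, false) :=
            (symAt hdvd hk2 hj hlev t x (bxor d x) hlx (agree_outside_bxor hd)).symm
          rw [hsym]
        · have hge : j * k ≤ dlb k n x := by omega
          have hge' : j * k ≤ dlb k n (bxor d x) := by
            rw [dlb_ge_iff hdvd hk hj.le]
            exact lead_ge_local hj.le (agree_outside_bxor hd)
              ((dlb_ge_iff hdvd hk hj.le).mp hge)
          rw [if_neg hpre, if_neg (by omega)]
      rw [Finset.sum_congr rfl hper, Finset.sum_comm, hS]
      refine Finset.sum_congr rfl (fun x _ => ?_)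
      by_cases hpre : dlb k n x < j * k
      · simp only [if_pos hpre]
        rw [← Finset.mul_sum, KF_orbit hdvd hk2 hj x]
      · simp only [if_neg hpre]
        exact Finset.sum_const_zero
    calc PO k n j lev (t + 1) = PO k n j lev t + S := hA
      _ ≤ 2 ^ k * FL k n lev t + S := add_le_add_left ih S
      _ = 2 ^ k * FL k n lev t + 2 ^ k * Sf := by rw [hC]
      _ = 2 ^ k * (FL k n lev t + Sf) := by ring
      _ ≤ 2 ^ k * FL k n lev (t + 1) := mul_le_mul_right hB _

end Main

section Decay
variable {k n j : ℕ}

lemma dist_sum_one (lev t : ℕ) : (∑ s, dVisitDist k n lev t s) = (1 : ℝ≥0∞) := by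
  have h := (dVisitDist k n lev t).tsum_coe
  rwa [tsum_fintype] at h

lemma PR_le_one (lev t : ℕ) : PR k n j lev t ≤ 1 := by
  calc PR k n j lev t ≤ ∑ s, dVisitDist k n lev t s * 1 := by
        rw [PR]
        refine Finset.sum_le_sum (fun s _ => mul_le_mul_right ?_ _)
        split <;> simp
    _ = ∑ s, dVisitDist k n lev t s := by simp [mul_one]
    _ = 1 := dist_sum_one lev t

lemma dlb_allOnes : dlb k n (allOnes n) = n := by
  rw [dlb, if_pos rfl]

lemma mutW_ones_ge (hn2 : 2 ≤ n) (x : BitStr n) :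
    ((n : ℝ≥0∞)⁻¹) ^ n ≤ mutW n x (allOnes n) := by
  have hfac : ∀ i : Fin n, (n : ℝ≥0∞)⁻¹ ≤
      (if allOnes n i = x i then 1 - (n : ℝ≥0∞)⁻¹ else (n : ℝ≥0∞)⁻¹) := by
    intro i
    by_cases h : allOnes n i = x i
    · rw [if_pos h]
      have h2 : (n : ℝ≥0∞)⁻¹ ≤ 2⁻¹ := by
        rw [ENNReal.inv_le_inv]
        exact_mod_cast hn2
      have h3 : (n : ℝ≥0∞)⁻¹ + (n : ℝ≥0∞)⁻¹ ≤ 1 := by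
        calc (n : ℝ≥0∞)⁻¹ + (n : ℝ≥0∞)⁻¹ ≤ 2⁻¹ + 2⁻¹ := add_le_add h2 h2
          _ = 1 := ENNReal.inv_two_add_inv_two
      exact ENNReal.le_sub_of_add_le_right (ENNReal.inv_ne_top.mpr (by
        simpa using (by omega : n ≠ 0))) h3
    · rw [if_neg h]
  calc ((n : ℝ≥0∞)⁻¹) ^ n = ∏ _i : Fin n, (n : ℝ≥0∞)⁻¹ := by
        rw [Finset.prod_const, Finset.card_univ, Fintype.card_fin]
    _ ≤ mutW n x (allOnes n) := Finset.prod_le_prod' (fun i _ => hfac i)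

lemma decay (hdvd : k ∣ n) (hk2 : 2 ≤ k) (hn2 : 2 ≤ n) (hj : j < n / k) (lev t : ℕ) :
    PR k n j lev (t + 1) ≤ (1 - ((n : ℝ≥0∞)⁻¹) ^ n) * PR k n j lev t := by
  classical
  have hk : 0 < k := by omega
  set δ : ℝ≥0∞ := ((n : ℝ≥0∞)⁻¹) ^ n with hδ
  have hstep : PR k n j lev (t + 1) = ∑ s, dVisitDist k n lev t s *
      ∑ y, mutW n s.1 y * (if dlb k n (Fstep k n lev s y).1 < j * k then (1:ℝ≥0∞) else 0) :=
    step_exp lev t _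
  rw [hstep]
  have hpoint : ∀ s : BitStr n × Bool,
      (∑ y, mutW n s.1 y * (if dlb k n (Fstep k n lev s y).1 < j * k then (1:ℝ≥0∞) else 0))
        ≤ (1 - δ) * (if dlb k n s.1 < j * k then 1 else 0) := by
    intro s
    by_cases hpre : dlb k n s.1 < j * k
    · rw [if_pos hpre, mul_one]
      have hones : ∀ y : BitStr n,
          (if dlb k n (Fstep k n lev s y).1 < j * k then (1:ℝ≥0∞) else 0)
            + (if y = allOnes n then (1:ℝ≥0∞) else 0) ≤ 1 := by
        intro y
        by_cases hy : y = allOnes n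
        · have hn' : j * k ≤ dlb k n (Fstep k n lev s y).1 := by
            subst hy
            simp only [Fstep, dlb_allOnes]
            rw [if_pos (dlb_le_n hdvd hk s.1), dlb_allOnes]
            have := blk_le_n hdvd hj
            omega
          rw [if_neg (not_lt.mpr hn'), if_pos hy, zero_add]
        · rw [if_neg hy, add_zero]
          split <;> simp
      have hsum : (∑ y, mutW n s.1 y *
          (if dlb k n (Fstep k n lev s y).1 < j * k then (1:ℝ≥0∞) else 0)) + δ ≤ 1 := by
        have hδle : δ ≤ mutW n s.1 (allOnes n) := mutW_ones_ge hn2 s.1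
        have hmask : mutW n s.1 (allOnes n)
            = ∑ y, mutW n s.1 y * (if y = allOnes n then (1:ℝ≥0∞) else 0) := by
          rw [show (∑ y, mutW n s.1 y * (if y = allOnes n then (1:ℝ≥0∞) else 0))
            = ∑ y, (if y = allOnes n then mutW n s.1 y else 0) from
              Finset.sum_congr rfl (fun y _ => by split <;> simp)]
          rw [Finset.sum_ite_eq' Finset.univ (allOnes n) (fun y => mutW n s.1 y)]
          simp
        calc (∑ y, mutW n s.1 y *
              (if dlb k n (Fstep k n lev s y).1 < j * k then (1:ℝ≥0∞) else 0)) + δ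
            ≤ (∑ y, mutW n s.1 y *
              (if dlb k n (Fstep k n lev s y).1 < j * k then (1:ℝ≥0∞) else 0))
              + mutW n s.1 (allOnes n) := add_le_add_right hδle _
          _ = ∑ y, (mutW n s.1 y *
              (if dlb k n (Fstep k n lev s y).1 < j * k then (1:ℝ≥0∞) else 0)
              + mutW n s.1 y * (if y = allOnes n then (1:ℝ≥0∞) else 0)) := by
              rw [hmask, Finset.sum_add_distrib]
          _ = ∑ y, mutW n s.1 y *
              ((if dlb k n (Fstep k n lev s y).1 < j * k then (1:ℝ≥0∞) else 0)
              + (if y = allOnes n then (1:ℝ≥0∞) else 0)) := by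
              refine Finset.sum_congr rfl (fun y _ => ?_)
              rw [mul_add]
          _ ≤ ∑ y, mutW n s.1 y * 1 :=
              Finset.sum_le_sum (fun y _ => mul_le_mul_right (hones y) _)
          _ = 1 := sum_mutW_one s.1
      refine ENNReal.le_sub_of_add_le_right ?_ hsum
      exact ENNReal.pow_ne_top (ENNReal.inv_ne_top.mpr (by
        simpa using (by omega : n ≠ 0)))
    · push_neg at hpre
      rw [if_neg (by omega), mul_zero]
      refine le_of_eq (Finset.sum_eq_zero (fun y _ => ?_))
      rw [if_neg (not_lt.mpr (post_stay lev hpre y)), mul_zero]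
  calc (∑ s, dVisitDist k n lev t s *
        ∑ y, mutW n s.1 y * (if dlb k n (Fstep k n lev s y).1 < j * k then (1:ℝ≥0∞) else 0))
      ≤ ∑ s, dVisitDist k n lev t s *
        ((1 - δ) * (if dlb k n s.1 < j * k then 1 else 0)) :=
        Finset.sum_le_sum (fun s _ => mul_le_mul_right (hpoint s) _)
    _ = (1 - δ) * PR k n j lev t := by
        rw [PR, Finset.mul_sum]
        exact Finset.sum_congr rfl (fun s _ => by ring)

lemma PO_add_PR (lev t : ℕ) : PO k n j lev t + PR k n j lev t = 1 := by
  calc PO k n j lev t + PR k n j lev t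
      = ∑ s, dVisitDist k n lev t s * ((if j * k ≤ dlb k n s.1 then 1 else 0)
          + (if dlb k n s.1 < j * k then 1 else 0)) := by
        rw [PO, PR, ← Finset.sum_add_distrib]
        exact Finset.sum_congr rfl (fun s _ => (mul_add _ _ _).symm)
    _ = ∑ s, dVisitDist k n lev t s := by
        refine Finset.sum_congr rfl (fun s _ => ?_)
        by_cases h : j * k ≤ dlb k n s.1
        · rw [if_pos h, if_neg (by omega), add_zero, mul_one]
        · rw [if_neg h, if_pos (by omega), zero_add, mul_one]
    _ = 1 := dist_sum_one lev t

lemma prOf_flag (p : PMF (BitStr n × Bool)) :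
    prOf p {s | s.2 = true} = ∑ s, p s * (if s.2 = true then 1 else 0) := by
  rw [prOf, tsum_fintype]
  refine Finset.sum_congr rfl (fun s _ => ?_)
  by_cases h : s.2 = true <;> simp [Set.indicator, h]

end Decay

end DLBaux

/-- In the Darwinian (1+1) EA on `DLB_k`, for every `j ∈ [0 .. n/k - 1]`, with
probability at least `2^{-k}` the run at some point has a parent individual of
fitness exactly `jk + k - 1` (i.e. with `j` leading all-ones blocks and all-zeros
`(j+1)`-st block): the fitness level `jk + k - 1` is visited with probability at
least `2^{-k}`. -/
theorem darwin_visits_level (k n : ℕ) (hk : 2 ≤ k) (hn : 0 < n) (hdvd : k ∣ n)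
    (j : ℕ) (hj : j < n / k) :
    ((2 : ℝ≥0∞) ^ k)⁻¹ ≤
      ⨆ t : ℕ, prOf (dVisitDist k n (j * k + k - 1) t) {s | s.2 = true} := by
  classical
  have hk0 : 0 < k := by omega
  have hn2 : 2 ≤ n := le_trans hk (Nat.le_of_dvd hn hdvd)
  set lev := j * k + k - 1 with hlevdef
  have hlev : lev = j * k + (k - 1) := by omega
  set δ : ℝ≥0∞ := ((n : ℝ≥0∞)⁻¹) ^ n with hδ
  have hδ0 : δ ≠ 0 := pow_ne_zero _ (ENNReal.inv_ne_zero.mpr (ENNReal.natCast_ne_top n))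
  set r : ℝ≥0∞ := 1 - δ with hr
  have hr1 : r < 1 := ENNReal.sub_lt_self ENNReal.one_ne_top one_ne_zero hδ0
  have hPR : ∀ t, DLBaux.PR k n j lev t ≤ r ^ t := by
    intro t
    induction t with
    | zero => simpa using DLBaux.PR_le_one (k := k) (n := n) (j := j) lev 0
    | succ t ih =>
      calc DLBaux.PR k n j lev (t + 1) ≤ r * DLBaux.PR k n j lev t :=
            DLBaux.decay hdvd hk hn2 hj lev t
        _ ≤ r * r ^ t := mul_le_mul_right ih r
        _ = r ^ (t + 1) := by rw [pow_succ]; ring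
  have h2k0 : ((2 : ℝ≥0∞) ^ k) ≠ 0 := pow_ne_zero k (by norm_num)
  have h2kt : ((2 : ℝ≥0∞) ^ k) ≠ ⊤ := ENNReal.pow_ne_top ENNReal.ofNat_ne_top
  have hFL : ∀ t, ((2 : ℝ≥0∞) ^ k)⁻¹ * (1 - r ^ t) ≤ DLBaux.FL k n lev t := by
    intro t
    have hPRtop : DLBaux.PR k n j lev t ≠ ⊤ :=
      ne_top_of_le_ne_top ENNReal.one_ne_top (DLBaux.PR_le_one lev t)
    have hPO : DLBaux.PO k n j lev t = 1 - DLBaux.PR k n j lev t :=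
      ENNReal.eq_sub_of_add_eq hPRtop (DLBaux.PO_add_PR lev t)
    have h1 : 1 - r ^ t ≤ DLBaux.PO k n j lev t := by
      rw [hPO]
      exact tsub_le_tsub_left (hPR t) 1
    calc ((2 : ℝ≥0∞) ^ k)⁻¹ * (1 - r ^ t)
        ≤ ((2 : ℝ≥0∞) ^ k)⁻¹ * DLBaux.PO k n j lev t := mul_le_mul_right h1 _
      _ ≤ ((2 : ℝ≥0∞) ^ k)⁻¹ * (2 ^ k * DLBaux.FL k n lev t) :=
          mul_le_mul_right (DLBaux.mainInv hdvd hk hj hlev t) _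
      _ = DLBaux.FL k n lev t := by
          rw [← mul_assoc, ENNReal.inv_mul_cancel h2k0 h2kt, one_mul]
  have hinf : (⨅ t : ℕ, r ^ t) = 0 := by
    have hanti : Antitone fun t : ℕ => r ^ t := fun a b hab =>
      pow_le_pow_of_le_one (zero_le) tsub_le_self hab
    exact tendsto_nhds_unique (tendsto_atTop_iInf hanti)
      (ENNReal.tendsto_pow_atTop_nhds_zero_of_lt_one hr1)
  have hprof : ∀ t, prOf (dVisitDist k n lev t) {s | s.2 = true} = DLBaux.FL k n lev t :=
    fun t => DLBaux.prOf_flag _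
  calc ((2 : ℝ≥0∞) ^ k)⁻¹
      = ((2 : ℝ≥0∞) ^ k)⁻¹ * (1 - ⨅ t : ℕ, r ^ t) := by rw [hinf, tsub_zero, mul_one]
    _ = ((2 : ℝ≥0∞) ^ k)⁻¹ * ⨆ t : ℕ, (1 - r ^ t) := by rw [ENNReal.sub_iInf]
    _ = ⨆ t : ℕ, ((2 : ℝ≥0∞) ^ k)⁻¹ * (1 - r ^ t) := ENNReal.mul_iSup _ _
    _ ≤ ⨆ t : ℕ, DLBaux.FL k n lev t := iSup_mono hFL
    _ = ⨆ t : ℕ, prOf (dVisitDist k n lev t) {s | s.2 = true} := (iSup_congr hprof).symm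


end
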